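/- Let β ∈ (0,2) and N > 0, and let B be a Young function with B(t) = N e^{t^β} for t > t₀. Then ∫_0^t B^{-1}(1/Φ(τ)) dτ = 2^{-1/β} (β/(2+β)) t^{2/β + 1} + 2^{-1/β} (2/(2-β)) t^{2/β - 1} log t + o(t^{2/β-1} log t) as t → ∞, where Φ is the Gaussian tail function. -/

import Mathlib

open MeasureTheory Filter

/-- The Gaussian tail function `Φ(t) = (2π)^{-1/2} ∫_t^∞ e^{-τ²/2} dτ`. -/
noncomputable def Phi (t : ℝ) : ℝ :=
  (Real.sqrt (2 * Real.pi))⁻¹ * ∫ τ in Set.Ioi t, Real.exp (-τ^2/2)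

open Set Real Topology

/-!
Mills' ratio `∫_t^∞ e^{-τ²/2} dτ ~ e^{-t²/2} / t` gives `log (1 / (N Φ(t))) = t²/2 + b(t)` with
`b(t) ~ log t`. For large `t` the integrand is therefore `(t²/2 + b(t))^{1/β}`, and expanding the
power around `t²/2` yields
`B⁻¹(1/Φ(t)) = 2^{-1/β} t^{2/β} + (2^{1-1/β}/β) t^{2/β-2} log t + o(t^{2/β-2} log t)`.
The main term integrates exactly; the remainder is integrated by a Stolz–Cesàro argument against
`t^{2/β-1} log t`, which tends to infinity because `β < 2`.
-/

theorem tendsto_one_add_rpow_sub_one_div (s : ℝ) :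
    Tendsto (fun u : ℝ => ((1 + u) ^ s - 1) / u) (𝓝[≠] 0) (𝓝 s) := by
  have h := (hasDerivAt_rpow_const (x := 1) (p := s) (Or.inl one_ne_zero)).tendsto_slope_zero
  simpa [div_eq_inv_mul] using h

theorem tendsto_add_rpow_sub_rpow_div {α : Type*} {l : Filter α} {a b : α → ℝ} (s : ℝ)
    (ha : ∀ᶠ x in l, 0 < a x) (hb : ∀ᶠ x in l, b x ≠ 0)
    (hba : Tendsto (fun x => b x / a x) l (𝓝 0)) :
    Tendsto (fun x => ((a x + b x) ^ s - a x ^ s) / (a x ^ (s - 1) * b x)) l (𝓝 s) := by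
  have hu : Tendsto (fun x => b x / a x) l (𝓝[≠] 0) :=
    tendsto_nhdsWithin_iff.2
      ⟨hba, by filter_upwards [ha, hb] with x hax hbx; exact div_ne_zero hbx hax.ne'⟩
  refine ((tendsto_one_add_rpow_sub_one_div s).comp hu).congr' ?_
  filter_upwards [ha, hba.eventually (eventually_gt_nhds (show (-1 : ℝ) < 0 by norm_num))]
    with x hax hux
  have h1 : a x + b x = a x * (1 + b x / a x) := by field_simp
  have h2 : 0 ≤ 1 + b x / a x := by linarith
  rw [Function.comp_apply, h1, mul_rpow hax.le h2, rpow_sub_one hax.ne']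
  field_simp

theorem abs_intervalIntegral_sub_le_of_hasDerivAt {r D W : ℝ → ℝ} {a b L ε : ℝ} (hab : a ≤ b)
    (hr : IntervalIntegrable r volume a b) (hD : ∀ x ∈ Icc a b, HasDerivAt D (W x) x)
    (hrW : ∀ x ∈ Ioo a b, |r x - L * W x| ≤ ε * W x) :
    |(∫ x in a..b, r x) - L * (D b - D a)| ≤ ε * (D b - D a) := by
  have hcont (c : ℝ) : ContinuousOn (fun y => c * D y) (Icc a b) := fun x hx =>
    ((hD x hx).continuousAt.const_mul c).continuousWithinAt
  have hderiv (c : ℝ) : ∀ x ∈ Ioo a b, HasDerivWithinAt (fun y => c * D y) (c * W x) (Ioi x) x :=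
    fun x hx => ((hD x (Ioo_subset_Icc_self hx)).const_mul c).hasDerivWithinAt
  have hlim : IntegrableOn r (Icc a b) := (intervalIntegrable_iff_integrableOn_Icc_of_le hab).1 hr
  have hlow := intervalIntegral.sub_le_integral_of_hasDeriv_right_of_le hab
    (hcont _) (hderiv (L - ε)) hlim fun x hx => by
      linarith [(abs_le.1 (hrW x hx)).1]
  have hupp := intervalIntegral.integral_le_sub_of_hasDeriv_right_of_le hab
    (hcont _) (hderiv (L + ε)) hlim fun x hx => by
      linarith [(abs_le.1 (hrW x hx)).2]
  rw [abs_le]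
  constructor <;> linarith

theorem tendsto_intervalIntegral_div_of_tendsto_div_deriv {r D W : ℝ → ℝ} {L : ℝ} (a : ℝ)
    (hr : ∀ u v, IntervalIntegrable r volume u v) (hD : ∀ᶠ x in atTop, HasDerivAt D (W x) x)
    (hW : ∀ᶠ x in atTop, 0 < W x) (hDtop : Tendsto D atTop atTop)
    (hL : Tendsto (fun t => r t / W t) atTop (𝓝 L)) :
    Tendsto (fun t => (∫ x in a..t, r x) / D t) atTop (𝓝 L) := by
  rw [Metric.tendsto_nhds]
  intro ε hε
  obtain ⟨T, hT⟩ := eventually_atTop.1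
    (hD.and (hW.and ((Metric.tendsto_nhds.1 hL) (ε / 2) (half_pos hε))))
  have hrW : ∀ x ≥ T, |r x - L * W x| ≤ ε / 2 * W x := fun x hx => by
    obtain ⟨-, hWx, hx⟩ := hT x hx
    have h : r x - L * W x = (r x / W x - L) * W x := by field_simp
    rw [h, abs_mul, abs_of_pos hWx]
    exact mul_le_mul_of_nonneg_right (Real.dist_eq _ _ ▸ hx).le hWx.le
  set K := |(∫ x in a..T, r x) - L * D T| + ε / 2 * |D T| with hK
  filter_upwards [eventually_ge_atTop T, hDtop.eventually_gt_atTop 0,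
    ((tendsto_const_nhds (x := K)).div_atTop hDtop).eventually (gt_mem_nhds (half_pos hε))]
    with t hTt hDt hKt
  have hmain := abs_intervalIntegral_sub_le_of_hasDerivAt hTt (hr T t)
    (fun x hx => (hT x hx.1).1) (fun x hx => hrW x hx.1.le)
  have hsplit : (∫ x in a..t, r x) - L * D t
      = ((∫ x in a..T, r x) - L * D T) + ((∫ x in T..t, r x) - L * (D t - D T)) := by
    rw [← intervalIntegral.integral_add_adjacent_intervals (hr a T) (hr T t)]; ring
  have hnum : |(∫ x in a..t, r x) - L * D t| ≤ K + ε / 2 * D t := by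
    rw [hsplit]
    calc _ ≤ |(∫ x in a..T, r x) - L * D T| + ε / 2 * (D t - D T) :=
          (abs_add_le _ _).trans (by gcongr)
      _ ≤ K + ε / 2 * D t := by rw [hK]; nlinarith [neg_abs_le (D T)]
  have hdiff : (∫ x in a..t, r x) / D t - L = ((∫ x in a..t, r x) - L * D t) / D t := by
    field_simp
  rw [Real.dist_eq, hdiff, abs_div, abs_of_pos hDt, div_lt_iff₀ hDt]
  rw [div_lt_iff₀ hDt] at hKt
  linarith

theorem hasDerivAt_rpow_mul_log {p x : ℝ} (hx : 0 < x) :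
    HasDerivAt (fun t => t ^ p * log t) (x ^ (p - 1) * (p * log x + 1)) x := by
  refine ((hasDerivAt_rpow_const (Or.inl hx.ne')).mul (hasDerivAt_log hx.ne')).congr_deriv ?_
  rw [rpow_sub_one hx.ne']
  field_simp

theorem tendsto_intervalIntegral_div_rpow_mul_log {r : ℝ → ℝ} {p L : ℝ} (a : ℝ) (hp : 0 < p)
    (hr : ∀ u v, IntervalIntegrable r volume u v)
    (hL : Tendsto (fun t => r t / (t ^ (p - 1) * log t)) atTop (𝓝 L)) :
    Tendsto (fun t => (∫ x in a..t, r x) / (t ^ p * log t)) atTop (𝓝 (L / p)) := by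
  have hW : Tendsto (fun t => p + (log t)⁻¹) atTop (𝓝 p) := by
    simpa using tendsto_inv_atTop_zero.comp tendsto_log_atTop |>.const_add p
  refine tendsto_intervalIntegral_div_of_tendsto_div_deriv a hr
    (eventually_gt_atTop 0 |>.mono fun x hx => hasDerivAt_rpow_mul_log hx) ?_
    ((tendsto_rpow_atTop hp).atTop_mul_atTop₀ tendsto_log_atTop) ((hL.div hW hp.ne').congr' ?_)
  · filter_upwards [eventually_gt_atTop 1] with x hx
    have := log_pos hx
    positivity
  · filter_upwards [eventually_gt_atTop 1] with x hx
    have := log_pos hx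
    have : 0 < x ^ (p - 1) := rpow_pos_of_pos (by linarith) _
    simp only [Pi.div_apply]
    field_simp

theorem tendsto_intervalIntegral_sub_div_rpow_mul_log {f : ℝ → ℝ} {c q p L : ℝ} (hq : -1 < q)
    (hp : 0 < p) (hf : ∀ u v, IntervalIntegrable f volume u v)
    (hL : Tendsto (fun t => (f t - c * t ^ q) / (t ^ (p - 1) * log t)) atTop (𝓝 L)) :
    Tendsto (fun t => ((∫ x in 0..t, f x) - c * t ^ (q + 1) / (q + 1)) / (t ^ p * log t)) atTop
      (𝓝 (L / p)) := by
  have hpow (u v : ℝ) : IntervalIntegrable (fun x => c * x ^ q) volume u v :=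
    (intervalIntegral.intervalIntegrable_rpow' hq).const_mul c
  refine (tendsto_intervalIntegral_div_rpow_mul_log 0 hp (fun u v => (hf u v).sub (hpow u v))
    hL).congr fun t => ?_
  rw [intervalIntegral.integral_sub (hf 0 t) (hpow 0 t), intervalIntegral.integral_const_mul,
    integral_rpow (Or.inl hq), zero_rpow (by linarith), sub_zero, mul_div_assoc]

noncomputable def gaussTail (t : ℝ) : ℝ := ∫ τ in Ioi t, exp (-τ ^ 2 / 2)

theorem integrable_exp_neg_sq_div_two : Integrable fun τ : ℝ => exp (-τ ^ 2 / 2) := by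
  simpa [div_eq_inv_mul] using integrable_exp_neg_mul_sq (b := 1 / 2) (by norm_num)

theorem gaussTail_pos (t : ℝ) : 0 < gaussTail t := by
  rw [gaussTail, setIntegral_pos_iff_support_of_nonneg_ae
    (Eventually.of_forall fun _ => (exp_pos _).le) integrable_exp_neg_sq_div_two.integrableOn]
  simp [Function.support, exp_ne_zero]

theorem gaussTail_antitone : Antitone gaussTail := fun _ _ hst =>
  setIntegral_mono_set integrable_exp_neg_sq_div_two.integrableOn
    (Eventually.of_forall fun _ => (exp_pos _).le) (Ioi_subset_Ioi hst).eventuallyLE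

theorem hasDerivAt_gaussTail (t : ℝ) : HasDerivAt gaussTail (-exp (-t ^ 2 / 2)) t := by
  have h : gaussTail = fun t => gaussTail 0 - ∫ τ in 0..t, exp (-τ ^ 2 / 2) := by
    ext t
    rw [gaussTail, gaussTail, ← intervalIntegral.integral_Ioi_sub_Ioi'
      integrable_exp_neg_sq_div_two.integrableOn integrable_exp_neg_sq_div_two.integrableOn]
    ring
  rw [h]
  exact ((Continuous.integral_hasStrictDerivAt (by fun_prop) 0 t).hasDerivAt).const_sub _

theorem tendsto_gaussTail_atTop : Tendsto gaussTail atTop (𝓝 0) :=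
  tendsto_integral_Ioi_zero tendsto_id

theorem tendsto_exp_neg_sq_div_two : Tendsto (fun t : ℝ => exp (-t ^ 2 / 2)) atTop (𝓝 0) :=
  tendsto_exp_atBot.comp <| by
    simpa only [neg_div, Function.comp_def] using tendsto_neg_atTop_atBot.comp
      ((tendsto_pow_atTop two_ne_zero).atTop_div_const two_pos)

theorem tendsto_gaussTail_div :
    Tendsto (fun t => gaussTail t / (exp (-t ^ 2 / 2) / t)) atTop (𝓝 1) := by
  have hg (t : ℝ) (ht : 0 < t) :
      HasDerivAt (fun t => exp (-t ^ 2 / 2) / t) (-exp (-t ^ 2 / 2) * (1 + (t ^ 2)⁻¹)) t := by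
    have h1 : HasDerivAt (fun x : ℝ => -x ^ 2 / 2) (-t) t :=
      ((hasDerivAt_pow 2 t).fun_neg.div_const 2).congr_deriv (by ring)
    refine (h1.exp.fun_div (hasDerivAt_id' t) ht.ne').congr_deriv ?_
    field_simp
    ring
  refine HasDerivAt.lhopital_zero_atTop (Eventually.of_forall hasDerivAt_gaussTail)
    (eventually_gt_atTop 0 |>.mono hg)
    (Eventually.of_forall fun t => mul_ne_zero (neg_ne_zero.2 (exp_pos _).ne') (by positivity))
    tendsto_gaussTail_atTop
    (by simpa [div_eq_mul_inv] using tendsto_exp_neg_sq_div_two.mul tendsto_inv_atTop_zero) ?_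
  have h : Tendsto (fun t : ℝ => (1 + (t ^ 2)⁻¹)⁻¹) atTop (𝓝 1) := by
    simpa using ((tendsto_inv_atTop_zero.comp (tendsto_pow_atTop (α := ℝ) two_ne_zero)).const_add
      1).inv₀ (by norm_num)
  refine h.congr fun t => ?_
  field_simp

theorem Phi_eq_mul_gaussTail (t : ℝ) : Phi t = (√(2 * π))⁻¹ * gaussTail t := rfl

theorem Phi_pos (t : ℝ) : 0 < Phi t := by
  rw [Phi_eq_mul_gaussTail]
  have := gaussTail_pos t
  positivity

theorem MonotoneOn.comp_one_div_Phi {g : ℝ → ℝ} (hg : MonotoneOn g (Ici 0)) :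
    Monotone fun t => g (1 / Phi t) := fun s t hst =>
  hg (one_div_pos.2 (Phi_pos s)).le (one_div_pos.2 (Phi_pos t)).le <|
    one_div_le_one_div_of_le (Phi_pos t) <|
      mul_le_mul_of_nonneg_left (gaussTail_antitone hst) (by positivity)

theorem tendsto_one_div_Phi_atTop : Tendsto (fun t => 1 / Phi t) atTop atTop := by
  have h0 : Tendsto Phi atTop (𝓝 0) := by
    have := tendsto_gaussTail_atTop.const_mul (√(2 * π))⁻¹
    rwa [mul_zero] at this
  have h : Tendsto Phi atTop (𝓝[>] 0) :=
    tendsto_nhdsWithin_iff.2 ⟨h0, Eventually.of_forall Phi_pos⟩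
  exact h.inv_tendsto_nhdsGT_zero.congr fun t => (one_div (Phi t)).symm

theorem tendsto_log_one_div_Phi_div_sub_div_log {N : ℝ} (hN : 0 < N) :
    Tendsto (fun t => (log (1 / Phi t / N) - t ^ 2 / 2) / log t) atTop (𝓝 1) := by
  set m := fun t => gaussTail t / (exp (-t ^ 2 / 2) / t)
  have hrem : Tendsto (fun t => 1 + (log (√(2 * π) / N) - log (m t)) / log t) atTop (𝓝 1) := by
    simpa using (((tendsto_gaussTail_div.log one_ne_zero).const_sub _).div_atTop
      tendsto_log_atTop).const_add 1
  refine hrem.congr' ?_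
  filter_upwards [eventually_gt_atTop 1] with t ht
  have ht0 : 0 < t := by linarith
  have hlog : 0 < log t := log_pos ht
  have hG := gaussTail_pos t
  have hm : 0 < m t := by positivity
  have hPhi : 1 / Phi t / N = √(2 * π) / N * (m t)⁻¹ * (t * exp (t ^ 2 / 2)) := by
    rw [Phi_eq_mul_gaussTail]
    field_simp
    simp only [m, neg_div, exp_neg]
    field_simp
  rw [hPhi, log_mul (by positivity) (by positivity), log_mul (by positivity) (by positivity),
    log_mul ht0.ne' (by positivity), log_inv, log_exp]
  field_simp
  ring

theorem sq_div_two_rpow {t : ℝ} (ht : 0 ≤ t) (s : ℝ) :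
    (t ^ 2 / 2) ^ s = 2 ^ (-s) * t ^ (2 * s) := by
  rw [div_rpow (by positivity) zero_le_two, ← rpow_natCast, ← rpow_mul ht, rpow_neg zero_le_two]
  push_cast
  ring

theorem tendsto_log_div_sq_div_two : Tendsto (fun t => log t / (t ^ 2 / 2)) atTop (𝓝 0) := by
  have := ((isLittleO_log_rpow_atTop two_pos).tendsto_div_nhds_zero).const_mul 2
  rw [mul_zero] at this
  refine this.congr fun t => ?_
  rw [rpow_two]
  ring

theorem tendsto_Binv_one_div_Phi_sub_rpow_div {β N R : ℝ} {Binv : ℝ → ℝ} (hβ : 0 < β)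
    (hN : 0 < N) (hBinv : ∀ r > R, Binv r = log (r / N) ^ (1 / β)) :
    Tendsto (fun t => (Binv (1 / Phi t) - 2 ^ (-1 / β) * t ^ (2 / β)) / (t ^ (2 / β - 2) * log t))
      atTop (𝓝 (2 * 2 ^ (-1 / β) / β)) := by
  set b := fun t => log (1 / Phi t / N) - t ^ 2 / 2
  have hb : Tendsto (fun t => b t / log t) atTop (𝓝 1) :=
    tendsto_log_one_div_Phi_div_sub_div_log hN
  have hba : Tendsto (fun t => b t / (t ^ 2 / 2)) atTop (𝓝 0) := by
    have := hb.mul tendsto_log_div_sq_div_two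
    rw [one_mul] at this
    refine this.congr' ?_
    filter_upwards [eventually_gt_atTop 1] with t ht
    have := log_pos ht
    field_simp
  have hbne : ∀ᶠ t in atTop, b t ≠ 0 := by
    filter_upwards [hb.eventually (eventually_ne_nhds one_ne_zero)] with t ht h
    simp [h] at ht
  have ha : ∀ᶠ t : ℝ in atTop, 0 < t ^ 2 / 2 :=
    eventually_gt_atTop 0 |>.mono fun t ht => by positivity
  have key := (tendsto_add_rpow_sub_rpow_div (1 / β) ha hbne hba).mul
    (hb.const_mul (2 * 2 ^ (-1 / β)))
  rw [show 1 / β * (2 * 2 ^ (-1 / β) * 1) = 2 * 2 ^ (-1 / β) / β by ring] at key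
  refine key.congr' ?_
  filter_upwards [eventually_gt_atTop 1, tendsto_one_div_Phi_atTop.eventually_gt_atTop R, hbne]
    with t ht hR hbt
  have ht0 : 0 < t := by linarith
  have hlog := log_pos ht
  rw [hBinv _ hR, show log (1 / Phi t / N) = t ^ 2 / 2 + b t by simp [b],
    sq_div_two_rpow ht0.le, sq_div_two_rpow ht0.le, show -(1 / β - 1) = 1 + -1 / β by ring,
    rpow_add two_pos, rpow_one, show 2 * (1 / β - 1) = 2 / β - 2 by ring,
    show 2 * (1 / β) = 2 / β by ring, neg_div]
  have : 0 < t ^ (2 / β - 2) := rpow_pos_of_pos ht0 _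
  field_simp

theorem Binv_integral_asymptotic_beta_small_general (β N t₀ : ℝ)
    (hβ : 0 < β) (hβ2 : β < 2) (hN : 0 < N)
    (Binv : ℝ → ℝ)
    (hBinvmono : MonotoneOn Binv (Set.Ici 0))
    (hBinv : ∀ r > N * Real.exp (t₀ ^ β), Binv r = (Real.log (r / N)) ^ (1/β)) :
    Tendsto (fun t =>
      ((∫ τ in (0:ℝ)..t, Binv (1 / Phi τ))
          - (2:ℝ) ^ (-1/β) * (β / (2 + β)) * t ^ (2/β + 1))
        / ((2:ℝ) ^ (-1/β) * (2 / (2 - β)) * t ^ (2/β - 1) * Real.log t))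
      atTop (nhds 1) := by
  have hq : 0 < 2 / β := div_pos two_pos hβ
  have hp : 0 < 2 / β - 1 := by rw [sub_pos, one_lt_div hβ]; exact hβ2
  have hexpand := tendsto_Binv_one_div_Phi_sub_rpow_div hβ hN hBinv
  rw [show 2 / β - 2 = 2 / β - 1 - 1 by ring] at hexpand
  have hlim := (tendsto_intervalIntegral_sub_div_rpow_mul_log (by linarith) hp
    (fun _ _ => hBinvmono.comp_one_div_Phi.intervalIntegrable) hexpand).div_const
    (2 ^ (-1 / β) * (2 / (2 - β)))
  have h2β : 0 < 2 - β := sub_pos.2 hβ2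
  rw [show 2 * 2 ^ (-1 / β) / β / (2 / β - 1) / (2 ^ (-1 / β) * (2 / (2 - β))) = 1 by
    field_simp] at hlim
  refine hlim.congr fun t => ?_
  rw [show 2 / β + 1 = (2 + β) / β by field_simp, div_div, mul_comm (t ^ (2 / β - 1) * log t),
    ← mul_assoc]
  congr 2
  field_simp

theorem Binv_integral_asymptotic_beta_small (β N t₀ : ℝ)
    (hβ : 0 < β) (hβ2 : β < 2) (hN : 0 < N) (ht₀ : 0 < t₀)
    (B Binv : ℝ → ℝ)
    (hBconv : ConvexOn ℝ (Set.Ici 0) B) (hB0 : B 0 = 0)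
    (hBform : ∀ t > t₀, B t = N * Real.exp (t ^ β))
    (hBinvmono : MonotoneOn Binv (Set.Ici 0))
    (hBinvnn : ∀ r ≥ (0:ℝ), 0 ≤ Binv r)
    (hBinv : ∀ r > N * Real.exp (t₀ ^ β), Binv r = (Real.log (r / N)) ^ (1/β)) :
    Tendsto (fun t =>
      ((∫ τ in (0:ℝ)..t, Binv (1 / Phi τ))
          - (2:ℝ) ^ (-1/β) * (β / (2 + β)) * t ^ (2/β + 1))
        / ((2:ℝ) ^ (-1/β) * (2 / (2 - β)) * t ^ (2/β - 1) * Real.log t))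
      atTop (nhds 1) :=
  Binv_integral_asymptotic_beta_small_general β N t₀ hβ hβ2 hN Binv hBinvmono hBinv
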